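/- arXiv:2109.05254 — 4 statements merged into one kernel-verified Lean document; each statement's English description precedes it below -/
import Mathlib

section
/- Let I ⊆ ℝ be an open interval, u : I → ℝ a C² function with u'(s) ≠ 0 for all s ∈ I, and v = (v₁,v₂,v₃) ∈ ℝ³. Define X(s,t) = (u(s) + t, s, −u(s) + t) (a cylindrical surface with rulings parallel to the lightlike vector (1,0,1)). Then EG − F² = −4u'(s)² < 0 at every point (non-degenerate), and X satisfies the translating soliton equation with respect to v at every point of I × ℝ if and only if 2v₂ u'(s) − v₁ + v₃ = 0 for all s ∈ I. In particular, if v₂ = 0 and v₁ = v₃ (i.e., v is parallel to the ruling direction (1,0,1)), then the equation holds for every such function u. -/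
noncomputable section

/-- The Lorentzian (Minkowski) inner product on ℝ³:
`⟨a,b⟩ = a₁b₁ + a₂b₂ − a₃b₃`. -/
def mink (a b : Fin 3 → ℝ) : ℝ := a 0 * b 0 + a 1 * b 1 - a 2 * b 2

/-- Determinant of the 3×3 matrix with rows `a`, `b`, `c`. -/
def det3 (a b c : Fin 3 → ℝ) : ℝ :=
  a 0 * (b 1 * c 2 - b 2 * c 1) - a 1 * (b 0 * c 2 - b 2 * c 0)
    + a 2 * (b 0 * c 1 - b 1 * c 0)

/-- Partial derivative `X_s` of a parametrized surface `X(s,t)`. -/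
def pS (X : ℝ → ℝ → Fin 3 → ℝ) (s t : ℝ) : Fin 3 → ℝ := deriv (fun a => X a t) s

/-- Partial derivative `X_t`. -/
def pT (X : ℝ → ℝ → Fin 3 → ℝ) (s t : ℝ) : Fin 3 → ℝ := deriv (fun b => X s b) t

/-- Second partial derivative `X_ss`. -/
def pSS (X : ℝ → ℝ → Fin 3 → ℝ) (s t : ℝ) : Fin 3 → ℝ := deriv (fun a => pS X a t) s

/-- Mixed second partial derivative `X_st`. -/
def pST (X : ℝ → ℝ → Fin 3 → ℝ) (s t : ℝ) : Fin 3 → ℝ := deriv (fun a => pT X a t) s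

/-- Second partial derivative `X_tt`. -/
def pTT (X : ℝ → ℝ → Fin 3 → ℝ) (s t : ℝ) : Fin 3 → ℝ := deriv (fun b => pT X s b) t

/-- Coefficient `E = ⟨X_s, X_s⟩` of the first fundamental form. -/
def coefE (X : ℝ → ℝ → Fin 3 → ℝ) (s t : ℝ) : ℝ := mink (pS X s t) (pS X s t)

/-- Coefficient `F = ⟨X_s, X_t⟩` of the first fundamental form. -/
def coefF (X : ℝ → ℝ → Fin 3 → ℝ) (s t : ℝ) : ℝ := mink (pS X s t) (pT X s t)

/-- Coefficient `G = ⟨X_t, X_t⟩` of the first fundamental form. -/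
def coefG (X : ℝ → ℝ → Fin 3 → ℝ) (s t : ℝ) : ℝ := mink (pT X s t) (pT X s t)

/-- `EG − F²` at `(s,t)`. -/
def disc (X : ℝ → ℝ → Fin 3 → ℝ) (s t : ℝ) : ℝ :=
  coefE X s t * coefG X s t - coefF X s t ^ 2

/-- The translating soliton equation with respect to the velocity `v` at the point `(s,t)`:
`E·det(X_s,X_t,X_tt) − 2F·det(X_s,X_t,X_st) + G·det(X_s,X_t,X_ss)
  = −|EG − F²|·det(X_s,X_t,v)`. -/
def SolitonEqAt (X : ℝ → ℝ → Fin 3 → ℝ) (v : Fin 3 → ℝ) (s t : ℝ) : Prop :=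
  coefE X s t * det3 (pS X s t) (pT X s t) (pTT X s t)
    - 2 * coefF X s t * det3 (pS X s t) (pT X s t) (pST X s t)
    + coefG X s t * det3 (pS X s t) (pT X s t) (pSS X s t)
  = -|disc X s t| * det3 (pS X s t) (pT X s t) v

/-!
The surface is the cylinder `c(s) + t w` over the curve `c(s) = (u s, s, -u s)` with lightlike
ruling `w = (1,0,1)`. Along any cylinder `X_t = w` and `X_st = X_tt = 0`, and `G = ⟨w,w⟩ = 0`
kills the remaining term, so the left side of the soliton equation vanishes, while
`EG - F² = -⟨c',w⟩²`. The equation thus reduces to `⟨c',w⟩² · det(c',w,v) = 0`; here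
`⟨c',w⟩ = 2u' ≠ 0` and `det(c',w,v) = -(2 v₂ u' - v₁ + v₃)`.
-/

def cylinder (c : ℝ → Fin 3 → ℝ) (w : Fin 3 → ℝ) : ℝ → ℝ → Fin 3 → ℝ :=
  fun s t => c s + t • w

namespace cylinder

variable (c : ℝ → Fin 3 → ℝ) (w : Fin 3 → ℝ) (s t : ℝ)

lemma pS_eq : pS (cylinder c w) s t = deriv c s :=
  deriv_add_const _

lemma pT_eq : pT (cylinder c w) s t = w :=
  (((hasDerivAt_id t).smul_const w).const_add (c s)).deriv.trans (one_smul ℝ w)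

lemma pST_eq : pST (cylinder c w) s t = 0 := by
  simp only [pST, pT_eq, deriv_const]

lemma pTT_eq : pTT (cylinder c w) s t = 0 := by
  simp only [pTT, pT_eq, deriv_const]

variable {w}

lemma disc_eq_of_lightlike (hw : mink w w = 0) :
    disc (cylinder c w) s t = -mink (deriv c s) w ^ 2 := by
  simp only [disc, coefG, coefF, pS_eq, pT_eq, hw]
  ring

lemma solitonEqAt_iff_of_lightlike (hw : mink w w = 0) (v : Fin 3 → ℝ) :
    SolitonEqAt (cylinder c w) v s t ↔ mink (deriv c s) w = 0 ∨ det3 (deriv c s) w v = 0 := by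
  have hdet0 : ∀ a b : Fin 3 → ℝ, det3 a b 0 = 0 := fun a b => by simp [det3]
  simp only [SolitonEqAt, disc_eq_of_lightlike c s t hw, pST_eq, pTT_eq, hdet0, coefG,
    pS_eq, pT_eq, hw, abs_neg, abs_sq]
  constructor
  · intro h
    simpa using h.symm
  · rintro (h | h) <;> simp [h]

end cylinder

lemma hasDerivAt_lightlikeDirectrix {u : ℝ → ℝ} {u' s : ℝ} (hu : HasDerivAt u u' s) :
    HasDerivAt (fun s => ![u s, s, -u s]) ![u', 1, -u'] s := by
  rw [hasDerivAt_pi]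
  intro i
  fin_cases i
  · simpa using hu
  · simpa using hasDerivAt_id' s
  · simpa using hu.fun_neg

lemma lightlikeCylinder_eq (u : ℝ → ℝ) :
    (fun s t => ![u s + t, s, -u s + t]) = cylinder (fun s => ![u s, s, -u s]) ![1, 0, 1] := by
  ext s t i
  fin_cases i <;> simp [cylinder]

lemma mink_lightlikeDirectrix_tangent (a : ℝ) : mink ![a, 1, -a] ![1, 0, 1] = 2 * a := by
  simp only [mink, Matrix.cons_val_zero, Matrix.cons_val_one, Matrix.cons_val]
  ring

lemma det3_lightlikeDirectrix_tangent (a v₁ v₂ v₃ : ℝ) :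
    det3 ![a, 1, -a] ![1, 0, 1] ![v₁, v₂, v₃] = -(2 * v₂ * a - v₁ + v₃) := by
  simp only [det3, Matrix.cons_val_zero, Matrix.cons_val_one, Matrix.cons_val]
  ring

theorem stmt3_general (I : Set ℝ) (hIopen : IsOpen I)
    (u : ℝ → ℝ) (hu : ContDiffOn ℝ 2 u I)
    (hu' : ∀ s ∈ I, deriv u s ≠ 0)
    (v₁ v₂ v₃ : ℝ) :
    (∀ s ∈ I, ∀ t : ℝ,
        disc (fun s t => ![u s + t, s, -u s + t]) s t = -(4 * (deriv u s) ^ 2) ∧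
        disc (fun s t => ![u s + t, s, -u s + t]) s t < 0) ∧
    ((∀ s ∈ I, ∀ t : ℝ,
        SolitonEqAt (fun s t => ![u s + t, s, -u s + t]) ![v₁, v₂, v₃] s t) ↔
      (∀ s ∈ I, 2 * v₂ * deriv u s - v₁ + v₃ = 0)) ∧
    (v₂ = 0 → v₁ = v₃ →
      ∀ s ∈ I, ∀ t : ℝ,
        SolitonEqAt (fun s t => ![u s + t, s, -u s + t]) ![v₁, v₂, v₃] s t) := by
  have hw : mink ![1, 0, 1] ![1, 0, 1] = 0 := by simp [mink]
  have hc : ∀ s ∈ I, deriv (fun s => ![u s, s, -u s]) s = ![deriv u s, 1, -deriv u s] :=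
    fun s hs => (hasDerivAt_lightlikeDirectrix
      ((hu.differentiableOn two_ne_zero s hs).differentiableAt
        (hIopen.mem_nhds hs)).hasDerivAt).deriv
  have hdisc : ∀ s ∈ I, ∀ t, disc (fun s t => ![u s + t, s, -u s + t]) s t
      = -(4 * (deriv u s) ^ 2) := fun s hs t => by
    rw [lightlikeCylinder_eq, cylinder.disc_eq_of_lightlike _ _ _ hw, hc s hs,
      mink_lightlikeDirectrix_tangent]
    ring
  have hsol : ∀ s ∈ I, ∀ t, SolitonEqAt (fun s t => ![u s + t, s, -u s + t]) ![v₁, v₂, v₃] s t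
      ↔ 2 * v₂ * deriv u s - v₁ + v₃ = 0 := fun s hs t => by
    rw [lightlikeCylinder_eq, cylinder.solitonEqAt_iff_of_lightlike _ _ _ hw, hc s hs,
      mink_lightlikeDirectrix_tangent, det3_lightlikeDirectrix_tangent, neg_eq_zero,
      or_iff_right (mul_ne_zero two_ne_zero (hu' s hs))]
  refine ⟨fun s hs t => ⟨hdisc s hs t, ?_⟩, ?_, ?_⟩
  · rw [hdisc s hs t]
    exact neg_lt_zero.2 (mul_pos four_pos (sq_pos_of_ne_zero (hu' s hs)))
  · exact ⟨fun h s hs => (hsol s hs 0).1 (h s hs 0), fun h s hs t => (hsol s hs t).2 (h s hs)⟩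
  · rintro rfl rfl s hs t
    exact (hsol s hs t).2 (by ring)

/-- For the cylindrical surface `X(s,t) = (u(s)+t, s, −u(s)+t)` with lightlike
rulings `(1,0,1)` over an open interval `I`, with `u' ≠ 0` on `I`:
`EG − F² = −4u'² < 0` everywhere, and the translating soliton equation w.r.t.
`v = (v₁,v₂,v₃)` holds on `I × ℝ` iff `2v₂u' − v₁ + v₃ = 0` on `I`. In particular,
if `v₂ = 0` and `v₁ = v₃` the equation holds for every such `u`. -/
theorem stmt3 (I : Set ℝ) (hIopen : IsOpen I) (hIconn : I.OrdConnected)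
    (u : ℝ → ℝ) (hu : ContDiffOn ℝ 2 u I)
    (hu' : ∀ s ∈ I, deriv u s ≠ 0)
    (v₁ v₂ v₃ : ℝ) :
    (∀ s ∈ I, ∀ t : ℝ,
        disc (fun s t => ![u s + t, s, -u s + t]) s t = -(4 * (deriv u s) ^ 2) ∧
        disc (fun s t => ![u s + t, s, -u s + t]) s t < 0) ∧
    ((∀ s ∈ I, ∀ t : ℝ,
        SolitonEqAt (fun s t => ![u s + t, s, -u s + t]) ![v₁, v₂, v₃] s t) ↔
      (∀ s ∈ I, 2 * v₂ * deriv u s - v₁ + v₃ = 0)) ∧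
    (v₂ = 0 → v₁ = v₃ →
      ∀ s ∈ I, ∀ t : ℝ,
        SolitonEqAt (fun s t => ![u s + t, s, -u s + t]) ![v₁, v₂, v₃] s t) :=
  stmt3_general I hIopen u hu hu' v₁ v₂ v₃
end
end

section
/- For any a > 0 and b, v₁ ∈ ℝ, let u(s) = log(e^s + √(e^{2s} + a)) + b for s ∈ ℝ. Then 1 − u'(s)² = a/(e^{2s} + a) > 0 for all s, and the cylindrical surface X(s,t) = (t, s, u(s)) satisfies the translating soliton equation with respect to v = (v₁, 1, 0) at every point of ℝ² (equivalently, u solves u'' = (1 − u'²)u'). -/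
noncomputable section

/-!
For the cylinder `X(s,t) = (t, s, u(s))` one has `X_s = (0, 1, u')`, `X_t = (1, 0, 0)`, hence
`E = 1 - u'²`, `F = 0`, `G = 1`, and of the second derivatives only `X_ss = (0, 0, u'')`
survives.
With `v = (v₁, 1, 0)` the soliton equation therefore reduces to the ODE `u'' = |1 - u'²| u'`.
For the given profile `u' = eˢ / √(e²ˢ + a)`, so `1 - u'² = a / (e²ˢ + a) > 0`, and
differentiating once more gives `u'' = a eˢ / (e²ˢ + a)^{3/2} = (1 - u'²) u'`.
-/

lemma hasDerivAt_vec3 {g₀ g₁ g₂ : ℝ → ℝ} {d₀ d₁ d₂ s : ℝ}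
    (h₀ : HasDerivAt g₀ d₀ s) (h₁ : HasDerivAt g₁ d₁ s) (h₂ : HasDerivAt g₂ d₂ s) :
    HasDerivAt (fun x => ![g₀ x, g₁ x, g₂ x]) ![d₀, d₁, d₂] s := by
  refine hasDerivAt_pi.mpr fun i => ?_
  fin_cases i
  · simpa using h₀
  · simpa using h₁
  · simpa using h₂

section Cylinder

variable {u : ℝ → ℝ}

lemma pS_cylinder (hu : Differentiable ℝ u) (s t : ℝ) :
    pS (fun s t => ![t, s, u s]) s t = ![0, 1, deriv u s] :=
  (hasDerivAt_vec3 (hasDerivAt_const s t) (hasDerivAt_id s) (hu s).hasDerivAt).deriv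

lemma pT_cylinder (s t : ℝ) : pT (fun s t => ![t, s, u s]) s t = ![1, 0, 0] :=
  (hasDerivAt_vec3 (hasDerivAt_id t) (hasDerivAt_const t s) (hasDerivAt_const t (u s))).deriv

lemma pSS_cylinder (hu : Differentiable ℝ u) {s : ℝ} (hu' : DifferentiableAt ℝ (deriv u) s)
    (t : ℝ) : pSS (fun s t => ![t, s, u s]) s t = ![0, 0, deriv (deriv u) s] := by
  rw [pSS, funext fun x => pS_cylinder hu x t]
  exact (hasDerivAt_vec3 (hasDerivAt_const s 0) (hasDerivAt_const s 1) hu'.hasDerivAt).deriv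

lemma pST_cylinder (s t : ℝ) : pST (fun s t => ![t, s, u s]) s t = 0 := by
  rw [pST, funext fun x => pT_cylinder (u := u) x t]
  exact deriv_const s _

lemma pTT_cylinder (s t : ℝ) : pTT (fun s t => ![t, s, u s]) s t = 0 := by
  rw [pTT, funext fun y => pT_cylinder (u := u) s y]
  exact deriv_const t _

theorem solitonEqAt_cylinder_iff (hu : Differentiable ℝ u) {s : ℝ}
    (hu' : DifferentiableAt ℝ (deriv u) s) (v₁ t : ℝ) :
    SolitonEqAt (fun s t => ![t, s, u s]) ![v₁, 1, 0] s t ↔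
      deriv (deriv u) s = |1 - deriv u s ^ 2| * deriv u s := by
  simp only [SolitonEqAt, disc, coefE, coefF, coefG, mink, det3, pS_cylinder hu,
    pT_cylinder, pSS_cylinder hu hu', pST_cylinder, pTT_cylinder]
  simp [sq]

end Cylinder

section Profile

variable {a : ℝ}

lemma exp_two_mul_add_pos (ha : 0 ≤ a) (s : ℝ) : 0 < Real.exp (2 * s) + a := by positivity

lemma hasDerivAt_sqrt_exp_two_mul_add (ha : 0 ≤ a) (s : ℝ) :
    HasDerivAt (fun x => √(Real.exp (2 * x) + a))
      (Real.exp (2 * s) / √(Real.exp (2 * s) + a)) s := by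
  have hpos := exp_two_mul_add_pos ha s
  have hw := Real.sqrt_pos.mpr hpos
  have h := (((hasDerivAt_id' s).const_mul 2).exp.add_const a).sqrt hpos.ne'
  convert h using 1
  field_simp

/-- `u'` for `u = log(eˢ + √(e²ˢ + a)) + b`. -/
def profileSlope (a s : ℝ) : ℝ := Real.exp s / √(Real.exp (2 * s) + a)

lemma hasDerivAt_log_exp_add_sqrt (ha : 0 ≤ a) (s : ℝ) :
    HasDerivAt (fun x => Real.log (Real.exp x + √(Real.exp (2 * x) + a)))
      (profileSlope a s) s := by
  have hw := Real.sqrt_pos.mpr (exp_two_mul_add_pos ha s)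
  have h := ((Real.hasDerivAt_exp s).add (hasDerivAt_sqrt_exp_two_mul_add ha s)).log
    (add_pos (Real.exp_pos s) hw).ne'
  refine h.congr_deriv ?_
  rw [Pi.add_apply, profileSlope, show Real.exp (2 * s) = Real.exp s * Real.exp s by
    rw [two_mul, Real.exp_add]]
  field_simp
  ring

lemma one_sub_profileSlope_sq (ha : 0 ≤ a) (s : ℝ) :
    1 - profileSlope a s ^ 2 = a / (Real.exp (2 * s) + a) := by
  have hpos := exp_two_mul_add_pos ha s
  rw [profileSlope, div_pow, Real.sq_sqrt hpos.le, ← Real.exp_nat_mul]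
  field_simp
  ring_nf

lemma hasDerivAt_profileSlope (ha : 0 ≤ a) (s : ℝ) :
    HasDerivAt (profileSlope a) ((1 - profileSlope a s ^ 2) * profileSlope a s) s := by
  have hpos := exp_two_mul_add_pos ha s
  have hw := Real.sqrt_pos.mpr hpos
  have h := (Real.hasDerivAt_exp s).div (hasDerivAt_sqrt_exp_two_mul_add ha s) hw.ne'
  refine h.congr_deriv ?_
  rw [one_sub_profileSlope_sq ha, profileSlope]
  field_simp
  rw [Real.sq_sqrt hpos.le]
  ring

end Profile

/-- For `a > 0`, the function `u(s) = log(eˢ + √(e²ˢ + a)) + b` satisfies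
`1 − u'² = a/(e²ˢ + a) > 0` and `u'' = (1 − u'²)u'` everywhere, and the cylindrical
surface `X(s,t) = (t, s, u(s))` is a translating soliton with respect to `v = (v₁,1,0)`. -/
theorem stmt7 (a b v₁ : ℝ) (ha : 0 < a) (u : ℝ → ℝ)
    (hu : u = fun s => Real.log (Real.exp s + Real.sqrt (Real.exp (2 * s) + a)) + b) :
    (∀ s : ℝ, 1 - (deriv u s) ^ 2 = a / (Real.exp (2 * s) + a)) ∧
    (∀ s : ℝ, 1 - (deriv u s) ^ 2 > 0) ∧
    (∀ s : ℝ, deriv (deriv u) s = (1 - (deriv u s) ^ 2) * deriv u s) ∧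
    (∀ s t : ℝ, SolitonEqAt (fun s t => ![t, s, u s]) ![v₁, 1, 0] s t) := by
  have hu_deriv (s : ℝ) : HasDerivAt u (profileSlope a s) s := by
    rw [hu]
    exact (hasDerivAt_log_exp_add_sqrt ha.le s).add_const b
  have hderiv : deriv u = profileSlope a := funext fun s => (hu_deriv s).deriv
  have hgap (s : ℝ) : 1 - deriv u s ^ 2 = a / (Real.exp (2 * s) + a) := by
    rw [hderiv, one_sub_profileSlope_sq ha.le]
  have hgap_pos (s : ℝ) : 1 - deriv u s ^ 2 > 0 := by
    rw [hgap]
    exact div_pos ha (exp_two_mul_add_pos ha.le s)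
  have hode (s : ℝ) : deriv (deriv u) s = (1 - deriv u s ^ 2) * deriv u s := by
    rw [hderiv]
    exact (hasDerivAt_profileSlope ha.le s).deriv
  refine ⟨hgap, hgap_pos, hode, fun s t => ?_⟩
  have hu' : DifferentiableAt ℝ (deriv u) s := by
    rw [hderiv]
    exact (hasDerivAt_profileSlope ha.le s).differentiableAt
  rw [solitonEqAt_cylinder_iff (fun x => (hu_deriv x).differentiableAt) hu',
    abs_of_pos (hgap_pos s)]
  exact hode s
end
end

section
/- For any a, b, v₃ ∈ ℝ, let u(s) = −log(cos(s + a)) + b on an interval where cos(s + a) > 0. Then the cylindrical surface X(s,t) = (s, u(s), t), whose rulings are parallel to the timelike vector (0,0,1), is timelike (EG − F² = −(1 + u'²) < 0) and satisfies the translating soliton equation with respect to v = (0, 1, v₃) at every point (s,t) with cos(s + a) > 0 (the Euclidean grim reaper viewed in Minkowski space; equivalently, u solves u'' = 1 + u'²). -/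
noncomputable section

/-! For a graph cylinder `X(s,t) = (s, u(s), t)` one has `X_s = (1, u', 0)`, `X_t = (0, 0, 1)` and
`X_st = X_tt = 0`, so `E = 1 + u'²`, `F = 0`, `G = -1`, and the soliton equation with
`v = (0, 1, v₃)` collapses to `u'' = 1 + u'²`. For `u = -log cos(s + a) + b` we get
`u' = tan(s + a)` and `u'' = sec²(s + a) = 1 + tan²(s + a)`. -/

open Real Filter Topology

theorem HasDerivAt.vec3 {𝕜 F : Type*} [NontriviallyNormedField 𝕜] [NormedAddCommGroup F]
    [NormedSpace 𝕜 F] {f g h : 𝕜 → F} {f' g' h' : F} {x : 𝕜} (hf : HasDerivAt f f' x)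
    (hg : HasDerivAt g g' x) (hh : HasDerivAt h h' x) :
    HasDerivAt (fun s => ![f s, g s, h s]) ![f', g', h'] x := by
  rw [hasDerivAt_pi]
  intro i
  fin_cases i <;> simpa

def graphCylinder (u : ℝ → ℝ) : ℝ → ℝ → Fin 3 → ℝ := fun s t => ![s, u s, t]

section GraphCylinder

variable {u : ℝ → ℝ}

theorem pT_graphCylinder (s t : ℝ) : pT (graphCylinder u) s t = ![0, 0, 1] :=
  ((hasDerivAt_const t s).vec3 (hasDerivAt_const t (u s)) (hasDerivAt_id t)).deriv

theorem pST_graphCylinder (s t : ℝ) : pST (graphCylinder u) s t = 0 := by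
  simp only [pST, pT_graphCylinder, deriv_const]

theorem pTT_graphCylinder (s t : ℝ) : pTT (graphCylinder u) s t = 0 := by
  simp only [pTT, pT_graphCylinder, deriv_const]

theorem pS_graphCylinder {s : ℝ} (hu : DifferentiableAt ℝ u s) (t : ℝ) :
    pS (graphCylinder u) s t = ![1, deriv u s, 0] :=
  ((hasDerivAt_id s).vec3 hu.hasDerivAt (hasDerivAt_const s t)).deriv

theorem pSS_graphCylinder {s : ℝ} (hu : ∀ᶠ y in 𝓝 s, DifferentiableAt ℝ u y)
    (hu' : DifferentiableAt ℝ (deriv u) s) (t : ℝ) :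
    pSS (graphCylinder u) s t = ![0, deriv (deriv u) s, 0] := by
  have hpS : (fun y => pS (graphCylinder u) y t) =ᶠ[𝓝 s] fun y => ![1, deriv u y, 0] := by
    filter_upwards [hu] with y hy using pS_graphCylinder hy t
  rw [pSS, hpS.deriv_eq]
  exact ((hasDerivAt_const s 1).vec3 hu'.hasDerivAt (hasDerivAt_const s 0)).deriv

theorem disc_graphCylinder {s : ℝ} (hu : DifferentiableAt ℝ u s) (t : ℝ) :
    disc (graphCylinder u) s t = -(1 + deriv u s ^ 2) := by
  simp only [disc, coefE, coefF, coefG, mink, pS_graphCylinder hu, pT_graphCylinder,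
    Matrix.cons_val]
  ring

theorem solitonEqAt_graphCylinder_iff {s : ℝ} (hu : ∀ᶠ y in 𝓝 s, DifferentiableAt ℝ u y)
    (hu' : DifferentiableAt ℝ (deriv u) s) (t v₃ : ℝ) :
    SolitonEqAt (graphCylinder u) ![0, 1, v₃] s t ↔ deriv (deriv u) s = 1 + deriv u s ^ 2 := by
  have hs : DifferentiableAt ℝ u s := hu.self_of_nhds
  rw [SolitonEqAt, disc_graphCylinder hs, abs_neg, abs_of_pos (by positivity)]
  simp [coefE, coefF, coefG, mink, det3, pS_graphCylinder hs, pT_graphCylinder,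
    pSS_graphCylinder hu hu', pST_graphCylinder, pTT_graphCylinder]

end GraphCylinder

def grimReaper (a b : ℝ) : ℝ → ℝ := fun s => -log (cos (s + a)) + b

section GrimReaper

variable {a x : ℝ}

theorem hasDerivAt_grimReaper (b : ℝ) (h : cos (x + a) ≠ 0) :
    HasDerivAt (grimReaper a b) (tan (x + a)) x := by
  have hcos : HasDerivAt (fun s => cos (s + a)) (-sin (x + a)) x := by
    simpa using (hasDerivAt_cos (x + a)).comp_add_const x a
  refine ((hcos.log h).neg.add_const b).congr_deriv ?_
  rw [tan_eq_sin_div_cos]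
  ring

theorem hasDerivAt_tan_add (h : cos (x + a) ≠ 0) :
    HasDerivAt (fun s => tan (s + a)) (1 + tan (x + a) ^ 2) x := by
  refine ((hasDerivAt_tan h).comp_add_const x a).congr_deriv ?_
  rw [tan_eq_sin_div_cos]
  field_simp
  rw [cos_sq_add_sin_sq]

theorem eventually_cos_add_ne_zero (h : cos (x + a) ≠ 0) : ∀ᶠ y in 𝓝 x, cos (y + a) ≠ 0 :=
  (isOpen_ne_fun (continuous_cos.comp (continuous_add_const a)) continuous_const).mem_nhds h

theorem deriv_grimReaper_eventuallyEq (b : ℝ) (h : cos (x + a) ≠ 0) :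
    deriv (grimReaper a b) =ᶠ[𝓝 x] fun s => tan (s + a) :=
  (eventually_cos_add_ne_zero h).mono fun _ hy => (hasDerivAt_grimReaper b hy).deriv

theorem differentiableAt_deriv_grimReaper (b : ℝ) (h : cos (x + a) ≠ 0) :
    DifferentiableAt ℝ (deriv (grimReaper a b)) x :=
  (hasDerivAt_tan_add h).differentiableAt.congr_of_eventuallyEq
    (deriv_grimReaper_eventuallyEq b h)

theorem grimReaper_ode (b : ℝ) (h : cos (x + a) ≠ 0) :
    deriv (deriv (grimReaper a b)) x = 1 + deriv (grimReaper a b) x ^ 2 := by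
  have hderiv := deriv_grimReaper_eventuallyEq b h
  rw [hderiv.deriv_eq, (hasDerivAt_tan_add h).deriv, hderiv.eq_of_nhds]

end GrimReaper

/-- The Euclidean grim reaper `u(s) = −log cos(s+a) + b` (where `cos(s+a) > 0`)
solves `u'' = 1 + u'²`, and the cylindrical surface `X(s,t) = (s, u(s), t)` with timelike
rulings `(0,0,1)` is timelike (`EG − F² = −(1 + u'²) < 0`) and is a translating soliton
with respect to `v = (0,1,v₃)` at every point `(s,t)` with `cos(s+a) > 0`. -/
theorem stmt9 (a b v₃ : ℝ) (u : ℝ → ℝ)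
    (hu : u = fun s => -Real.log (Real.cos (s + a)) + b) :
    (∀ s : ℝ, 0 < Real.cos (s + a) → deriv (deriv u) s = 1 + (deriv u s) ^ 2) ∧
    (∀ s t : ℝ, 0 < Real.cos (s + a) →
        disc (fun s t => ![s, u s, t]) s t = -(1 + (deriv u s) ^ 2) ∧
        disc (fun s t => ![s, u s, t]) s t < 0 ∧
        SolitonEqAt (fun s t => ![s, u s, t]) ![0, 1, v₃] s t) := by
  change u = grimReaper a b at hu
  subst hu
  refine ⟨fun s hs => grimReaper_ode b hs.ne', fun s t hs => ?_⟩
  have hdiff : ∀ᶠ y in 𝓝 s, DifferentiableAt ℝ (grimReaper a b) y :=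
    (eventually_cos_add_ne_zero hs.ne').mono fun _ hy =>
      (hasDerivAt_grimReaper b hy).differentiableAt
  have hdisc := disc_graphCylinder hdiff.self_of_nhds t
  refine ⟨hdisc, hdisc.trans_lt (neg_neg_of_pos (by positivity)), ?_⟩
  exact (solitonEqAt_graphCylinder_iff hdiff (differentiableAt_deriv_grimReaper b hs.ne') t v₃).2
    (grimReaper_ode b hs.ne')
end
end

section
/- (First conclusion of Theorem 3.) Let I ⊆ ℝ be an open interval, δ, η ∈ {−1,1}, and γ, w : I → ℝ³ C² maps with ⟨w(s),w(s)⟩ = δ, ⟨w'(s),w'(s)⟩ = η and ⟨γ'(s),w'(s)⟩ = 0 for all s ∈ I. Let v ∈ ℝ³, let J ⊆ ℝ be a nonempty open interval, set X(s,t) = γ(s) + t·w(s), and suppose there is ε ∈ {−1,1} with ε·(EG − F²) < 0 at every point of I × J. If X satisfies the translating soliton equation with respect to v at every point of I × J, then det(w(s), w'(s), v) = 0 for all s ∈ I; consequently, for each s, v lies in the linear span of w(s) and w'(s). -/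
/-!
Along a ruled surface `X(s,t) = γ(s) + t·w(s)` we have `X_t = w`, `X_tt = 0`, `X_st = w'`, while
`X_s` and `X_ss` are affine in `t`. Once `−|EG − F²|` is replaced by `ε(EG − F²)`, the soliton
equation at a fixed `s` becomes a cubic polynomial identity in `t`, valid on the infinite set `J`.
Its `t³`-coefficient is `ε(⟨w,w⟩⟨w',w'⟩ − ⟨w,w'⟩²)·det(w,w',v) = εδη·det(w,w',v)`, since
`⟨w,w'⟩ = 0` by differentiating `⟨w,w⟩ = δ`; hence `det(w,w',v) = 0`. The Gram determinant
`δη ≠ 0` makes `w, w'` independent, so `v` lies in their span.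
-/

noncomputable section

open Filter Topology

lemma mink_comm (a b : Fin 3 → ℝ) : mink a b = mink b a := by
  unfold mink; ring

theorem HasDerivAt.mink {f g : ℝ → Fin 3 → ℝ} {f' g' : Fin 3 → ℝ} {x : ℝ}
    (hf : HasDerivAt f f' x) (hg : HasDerivAt g g' x) :
    HasDerivAt (fun y => mink (f y) (g y)) (mink f' (g x) + mink (f x) g') x := by
  have hfi := fun i => hasDerivAt_pi.mp hf i
  have hgi := fun i => hasDerivAt_pi.mp hg i
  simp only [_root_.mink]
  exact ((((hfi 0).mul (hgi 0)).add ((hfi 1).mul (hgi 1))).sub ((hfi 2).mul (hgi 2))).congr_deriv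
    (by ring)

lemma mink_self_deriv_eq_zero {w : ℝ → Fin 3 → ℝ} {s δ : ℝ} (hw : DifferentiableAt ℝ w s)
    (hconst : ∀ᶠ a in 𝓝 s, mink (w a) (w a) = δ) :
    mink (w s) (deriv w s) = 0 := by
  have hderiv := (hw.hasDerivAt.mink hw.hasDerivAt).deriv
  rw [Filter.EventuallyEq.deriv_eq hconst, deriv_const, mink_comm (deriv w s)] at hderiv
  linarith

/-- `lorentzCross a b` is the vector with `⟨lorentzCross a b, c⟩ = det(a,b,c)`. -/
def lorentzCross (a b : Fin 3 → ℝ) : Fin 3 → ℝ :=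
  ![a 1 * b 2 - a 2 * b 1, a 2 * b 0 - a 0 * b 2, a 1 * b 0 - a 0 * b 1]

lemma det3_lorentzCross (a b : Fin 3 → ℝ) :
    det3 a b (lorentzCross a b) = mink a b ^ 2 - mink a a * mink b b := by
  simp only [det3, mink, lorentzCross, Matrix.cons_val]; ring

lemma det3_smul_eq_add_add (a b c v : Fin 3 → ℝ) :
    det3 a b c • v = det3 v b c • a + det3 a v c • b + det3 a b v • c := by
  funext i
  simp only [det3, Pi.smul_apply, smul_eq_mul, Pi.add_apply]
  fin_cases i <;> simp only [Fin.zero_eta, Fin.mk_one, Fin.reduceFinMk] <;> ring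

lemma mem_span_pair_of_det3_eq_zero {a b v : Fin 3 → ℝ}
    (hgram : mink a a * mink b b - mink a b ^ 2 ≠ 0) (hdet : det3 a b v = 0) :
    v ∈ Submodule.span ℝ ({a, b} : Set (Fin 3 → ℝ)) := by
  set c := lorentzCross a b
  have hc : det3 a b c ≠ 0 := by
    rw [det3_lorentzCross]; intro h; exact hgram (by linarith)
  have hv := det3_smul_eq_add_add a b c v
  rw [hdet, zero_smul, add_zero] at hv
  rw [Submodule.mem_span_pair]
  refine ⟨(det3 a b c)⁻¹ * det3 v b c, (det3 a b c)⁻¹ * det3 a v c, ?_⟩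
  rw [mul_smul, mul_smul, ← smul_add, ← hv, smul_smul, inv_mul_cancel₀ hc, one_smul]

lemma eq_zero_of_cubic_eq_zero_on_infinite {J : Set ℝ} (hJ : J.Infinite) {c₀ c₁ c₂ c₃ : ℝ}
    (h : ∀ t ∈ J, c₀ + c₁ * t + c₂ * t ^ 2 + c₃ * t ^ 3 = 0) : c₃ = 0 := by
  open Polynomial in
  set p : ℝ[X] := C c₀ + C c₁ * X + C c₂ * X ^ 2 + C c₃ * X ^ 3
  have hp : p = 0 := by
    refine p.eq_zero_of_infinite_isRoot (hJ.mono fun t ht => ?_)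
    simpa [p] using h t ht
  simpa [p, coeff_X, coeff_C, coeff_X_pow] using congrArg (Polynomial.coeff · 3) hp

/-- The translating soliton equation with `−|EG − F²|` replaced by `ε(EG − F²)`, as a defect. -/
def solitonDefect (X : ℝ → ℝ → Fin 3 → ℝ) (v : Fin 3 → ℝ) (ε s t : ℝ) : ℝ :=
  coefE X s t * det3 (pS X s t) (pT X s t) (pTT X s t)
    - 2 * coefF X s t * det3 (pS X s t) (pT X s t) (pST X s t)
    + coefG X s t * det3 (pS X s t) (pT X s t) (pSS X s t)
    - ε * disc X s t * det3 (pS X s t) (pT X s t) v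

lemma solitonDefect_eq_zero {X : ℝ → ℝ → Fin 3 → ℝ} {v : Fin 3 → ℝ} {ε s t : ℝ}
    (hsol : SolitonEqAt X v s t) (hε : ε = 1 ∨ ε = -1) (hnd : ε * disc X s t < 0) :
    solitonDefect X v ε s t = 0 := by
  have habs : -|disc X s t| = ε * disc X s t := by
    rcases hε with rfl | rfl
    · rw [abs_of_neg (by linarith)]; ring
    · rw [abs_of_pos (by linarith)]; ring
  unfold SolitonEqAt at hsol
  rw [solitonDefect, hsol, habs]; ring

def ruledSurface (γ w : ℝ → Fin 3 → ℝ) : ℝ → ℝ → Fin 3 → ℝ := fun s t => γ s + t • w s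

section RuledSurface

variable {γ w : ℝ → Fin 3 → ℝ} {s : ℝ}

lemma pT_ruledSurface (t : ℝ) : pT (ruledSurface γ w) s t = w s :=
  (((hasDerivAt_id t).smul_const (w s)).const_add (γ s)).deriv.trans (one_smul ℝ _)

lemma pTT_ruledSurface (t : ℝ) : pTT (ruledSurface γ w) s t = 0 := by
  simp only [pTT, pT_ruledSurface, deriv_const]

lemma pST_ruledSurface (t : ℝ) : pST (ruledSurface γ w) s t = deriv w s := by
  simp only [pST, pT_ruledSurface]

lemma pS_ruledSurface (hγ : DifferentiableAt ℝ γ s) (hw : DifferentiableAt ℝ w s) (t : ℝ) :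
    pS (ruledSurface γ w) s t = deriv γ s + t • deriv w s :=
  (hγ.hasDerivAt.add (hw.hasDerivAt.const_smul t)).deriv

lemma pSS_ruledSurface (hγ : ∀ᶠ a in 𝓝 s, DifferentiableAt ℝ γ a)
    (hw : ∀ᶠ a in 𝓝 s, DifferentiableAt ℝ w a)
    (hγ' : DifferentiableAt ℝ (deriv γ) s) (hw' : DifferentiableAt ℝ (deriv w) s) (t : ℝ) :
    pSS (ruledSurface γ w) s t = deriv (deriv γ) s + t • deriv (deriv w) s := by
  have hpS : (fun a => pS (ruledSurface γ w) a t) =ᶠ[𝓝 s] fun a => deriv γ a + t • deriv w a :=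
    (hγ.and hw).mono fun a ha => pS_ruledSurface ha.1 ha.2 t
  rw [pSS, hpS.deriv_eq]
  exact (hγ'.hasDerivAt.add (hw'.hasDerivAt.const_smul t)).deriv

lemma exists_solitonDefect_ruledSurface_eq_cubic (hγ : ∀ᶠ a in 𝓝 s, DifferentiableAt ℝ γ a)
    (hw : ∀ᶠ a in 𝓝 s, DifferentiableAt ℝ w a)
    (hγ' : DifferentiableAt ℝ (deriv γ) s) (hw' : DifferentiableAt ℝ (deriv w) s)
    (v : Fin 3 → ℝ) (ε : ℝ) :
    ∃ c₀ c₁ c₂ : ℝ, ∀ t, solitonDefect (ruledSurface γ w) v ε s t =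
      c₀ + c₁ * t + c₂ * t ^ 2 + ε * (mink (w s) (w s) * mink (deriv w s) (deriv w s)
        - mink (w s) (deriv w s) ^ 2) * det3 (w s) (deriv w s) v * t ^ 3 := by
  set A := deriv γ s
  set B := deriv w s
  set W := w s
  set C := deriv (deriv γ) s
  set D := deriv (deriv w) s
  set d₀ := mink A A * mink W W - mink A W ^ 2
  set d₁ := 2 * mink A B * mink W W - 2 * mink A W * mink B W
  set d₂ := mink B B * mink W W - mink B W ^ 2
  refine ⟨-2 * mink A W * det3 A W B + mink W W * det3 A W C - ε * d₀ * det3 A W v,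
    -2 * mink B W * det3 A W B + mink W W * (det3 A W D + det3 B W C)
      - ε * (d₀ * det3 B W v + d₁ * det3 A W v),
    mink W W * det3 B W D - ε * (d₁ * det3 B W v + d₂ * det3 A W v), fun t => ?_⟩
  rw [solitonDefect, disc, coefE, coefF, coefG, pS_ruledSurface hγ.self_of_nhds hw.self_of_nhds,
    pT_ruledSurface, pTT_ruledSurface, pST_ruledSurface, pSS_ruledSurface hγ hw hγ' hw']
  simp only [d₀, d₁, d₂, mink, det3, Pi.add_apply, Pi.smul_apply, smul_eq_mul, Pi.zero_apply]
  ring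

end RuledSurface

theorem stmt12_general (I : Set ℝ) (hIopen : IsOpen I)
    (δ η : ℝ) (hδ : δ = 1 ∨ δ = -1) (hη : η = 1 ∨ η = -1)
    (γ w : ℝ → Fin 3 → ℝ)
    (hγ : ContDiffOn ℝ 2 γ I) (hw : ContDiffOn ℝ 2 w I)
    (hwδ : ∀ s ∈ I, mink (w s) (w s) = δ)
    (hwη : ∀ s ∈ I, mink (deriv w s) (deriv w s) = η)
    (v : Fin 3 → ℝ)
    (J : Set ℝ) (hJopen : IsOpen J) (hJne : J.Nonempty)
    (ε : ℝ) (hε : ε = 1 ∨ ε = -1)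
    (hnd : ∀ s ∈ I, ∀ t ∈ J, ε * disc (fun s t => γ s + t • w s) s t < 0)
    (hsol : ∀ s ∈ I, ∀ t ∈ J, SolitonEqAt (fun s t => γ s + t • w s) v s t) :
    ∀ s ∈ I, det3 (w s) (deriv w s) v = 0 ∧
      v ∈ Submodule.span ℝ ({w s, deriv w s} : Set (Fin 3 → ℝ)) := by
  intro s hs
  have hI : I ∈ 𝓝 s := hIopen.mem_nhds hs
  have hγd : ∀ᶠ a in 𝓝 s, DifferentiableAt ℝ γ a := eventually_of_mem hI fun a ha =>
    (hγ.contDiffAt (hIopen.mem_nhds ha)).differentiableAt two_ne_zero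
  have hwd : ∀ᶠ a in 𝓝 s, DifferentiableAt ℝ w a := eventually_of_mem hI fun a ha =>
    (hw.contDiffAt (hIopen.mem_nhds ha)).differentiableAt two_ne_zero
  have hγ'd : DifferentiableAt ℝ (deriv γ) s :=
    ((hγ.deriv_of_isOpen hIopen (m := 1) le_rfl).contDiffAt hI).differentiableAt one_ne_zero
  have hw'd : DifferentiableAt ℝ (deriv w) s :=
    ((hw.deriv_of_isOpen hIopen (m := 1) le_rfl).contDiffAt hI).differentiableAt one_ne_zero
  have hww' : mink (w s) (deriv w s) = 0 :=
    mink_self_deriv_eq_zero hwd.self_of_nhds (eventually_of_mem hI hwδ)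
  have hgram :
      mink (w s) (w s) * mink (deriv w s) (deriv w s) - mink (w s) (deriv w s) ^ 2 ≠ 0 := by
    rw [hwδ s hs, hwη s hs, hww']
    rcases hδ with rfl | rfl <;> rcases hη with rfl | rfl <;> norm_num
  obtain ⟨c₀, c₁, c₂, hcubic⟩ := exists_solitonDefect_ruledSurface_eq_cubic hγd hwd hγ'd hw'd v ε
  obtain ⟨t₀, ht₀⟩ := hJne
  have hJ : J.Infinite := infinite_of_mem_nhds t₀ (hJopen.mem_nhds ht₀)
  have hlead := eq_zero_of_cubic_eq_zero_on_infinite hJ fun t ht =>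
    (hcubic t).symm.trans (solitonDefect_eq_zero (hsol s hs t ht) hε (hnd s hs t ht))
  have hε0 : ε ≠ 0 := by rcases hε with rfl | rfl <;> norm_num
  have hdet : det3 (w s) (deriv w s) v = 0 := by simpa [hε0, hgram] using hlead
  exact ⟨hdet, mem_span_pair_of_det3_eq_zero hgram hdet⟩

/-- first conclusion of Theorem 3: for a non-cylindrical ruled surface
`X(s,t) = γ(s) + t·w(s)` normalized by `⟨w,w⟩ = δ`, `⟨w',w'⟩ = η` (`δ,η ∈ {−1,1}`) and
`⟨γ',w'⟩ = 0`, which is non-degenerate with sign `ε` (`ε·(EG−F²) < 0`) on `I × J` and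
satisfies the translating soliton equation w.r.t. `v` on `I × J`, one has
`det(w(s), w'(s), v) = 0` for all `s ∈ I`; consequently `v ∈ span{w(s), w'(s)}`. -/
theorem stmt12 (I : Set ℝ) (hIopen : IsOpen I) (hIconn : I.OrdConnected)
    (δ η : ℝ) (hδ : δ = 1 ∨ δ = -1) (hη : η = 1 ∨ η = -1)
    (γ w : ℝ → Fin 3 → ℝ)
    (hγ : ContDiffOn ℝ 2 γ I) (hw : ContDiffOn ℝ 2 w I)
    (hwδ : ∀ s ∈ I, mink (w s) (w s) = δ)
    (hwη : ∀ s ∈ I, mink (deriv w s) (deriv w s) = η)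
    (hstr : ∀ s ∈ I, mink (deriv γ s) (deriv w s) = 0)
    (v : Fin 3 → ℝ)
    (J : Set ℝ) (hJopen : IsOpen J) (hJconn : J.OrdConnected) (hJne : J.Nonempty)
    (ε : ℝ) (hε : ε = 1 ∨ ε = -1)
    (hnd : ∀ s ∈ I, ∀ t ∈ J, ε * disc (fun s t => γ s + t • w s) s t < 0)
    (hsol : ∀ s ∈ I, ∀ t ∈ J, SolitonEqAt (fun s t => γ s + t • w s) v s t) :
    ∀ s ∈ I, det3 (w s) (deriv w s) v = 0 ∧
      v ∈ Submodule.span ℝ ({w s, deriv w s} : Set (Fin 3 → ℝ)) :=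
  stmt12_general I hIopen δ η hδ hη γ w hγ hw hwδ hwη v J hJopen hJne ε hε hnd hsol
end
end
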